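/- arXiv:1907.04117 — 4 statements merged into one kernel-verified Lean document; each statement's English description precedes it below -/
import Mathlib

section
/- Let M be an m×m real matrix with nonnegative entries. Suppose for every x ∈ T and y ∈ T', |yᵀMx| ≤ α, where T := {x ∈ ((ε/√m)ℤ)^m : ‖x‖ ≤ 1, x ⟂ 1} and T' := {y ∈ ((ε/√m)ℤ)^m : ‖y‖ ≤ 1}, for some ε ∈ (0,1/3). Then for every z ∈ ℝ^m with ‖z‖ = 1 and z ⟂ 1, we have ‖Mz‖ ≤ (1 − 3ε)^{−1}·α. -/
/-!
Let `S` be the operator norm of `M` restricted to the hyperplane `1ᗮ`, and `z ∈ 1ᗮ` a unit vector.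
Round `(1 - ε) z` to a lattice point `x ∈ T` (so `‖x - z‖ ≤ 2ε`) and `w = Mz / ‖Mz‖` to a lattice
point `y ∈ T'` (so `‖y - w‖ ≤ ε`). Expanding `yᵀMx` around `wᵀMz = ‖Mz‖` gives
`α ≥ yᵀMx ≥ (1 - ε) ‖Mz‖ - 2εS`; taking the supremum over `z`, `(1 - 3ε) S ≤ α`.
Rounding inside `1ᗮ` works because the fractional parts of a zero-sum vector add up to an
integer, which is the number of coordinates to round up instead of down.
-/

open Finset Matrix WithLp
open scoped RealInnerProductSpace

section Lattice

variable {ι : Type*} [Fintype ι]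

def IsLatticePoint (δ : ℝ) (x : ι → ℝ) : Prop :=
  ∀ u, ∃ k : ℤ, x u = k * δ

lemma exists_int_abs_mul_le_abs_sub_le {δ : ℝ} (hδ : 0 < δ) (t : ℝ) :
    ∃ k : ℤ, |k * δ| ≤ |t| ∧ |k * δ - t| ≤ δ := by
  wlog ht : 0 ≤ t generalizing t
  · obtain ⟨k, hk, hk'⟩ := this (-t) (by linarith)
    refine ⟨-k, ?_, ?_⟩
    · simpa [neg_mul, abs_neg] using hk
    · rw [Int.cast_neg, neg_mul, ← abs_neg]
      simpa [add_comm] using hk'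
  refine ⟨⌊t / δ⌋, ?_, ?_⟩
  · have h0 : 0 ≤ (⌊t / δ⌋ : ℝ) * δ := by
      have := Int.floor_nonneg.2 (div_nonneg ht hδ.le)
      positivity
    rw [abs_of_nonneg h0, abs_of_nonneg ht]
    exact (le_div_iff₀ hδ).1 (Int.floor_le _)
  · have hfract : (⌊t / δ⌋ : ℝ) * δ - t = -(Int.fract (t / δ) * δ) := by
      rw [← Int.self_sub_floor]; field_simp; ring
    rw [hfract, abs_neg, abs_of_nonneg (by have := Int.fract_nonneg (t / δ); positivity)]
    exact mul_le_of_le_one_left hδ.le (Int.fract_lt_one _).le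

lemma exists_int_sum_eq_zero_abs_sub_le_one (c : ι → ℝ) (hc : ∑ u, c u = 0) :
    ∃ k : ι → ℤ, ∑ u, k u = 0 ∧ ∀ u, |(k u : ℝ) - c u| ≤ 1 := by
  classical
  set n : ℤ := -∑ u, ⌊c u⌋
  have hn : (n : ℝ) = ∑ u, Int.fract (c u) := by
    simp only [n, ← Int.self_sub_floor, sum_sub_distrib, hc]
    push_cast; ring
  have hn0 : 0 ≤ n := by
    exact_mod_cast hn ▸ sum_nonneg fun u _ => Int.fract_nonneg (c u)
  have hn_card : n.toNat ≤ #(univ : Finset ι) := by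
    have : (n : ℝ) ≤ #(univ : Finset ι) := by
      rw [hn, ← nsmul_one, ← sum_const]
      exact sum_le_sum fun u _ => (Int.fract_lt_one (c u)).le
    have : n ≤ #(univ : Finset ι) := by exact_mod_cast this
    omega
  obtain ⟨A, -, hA⟩ := exists_subset_card_eq hn_card
  refine ⟨fun u => ⌊c u⌋ + if u ∈ A then 1 else 0, ?_, fun u => ?_⟩
  · simp only [sum_add_distrib, sum_ite_mem, univ_inter, sum_const, hA, nsmul_eq_mul, mul_one]
    omega
  · have := Int.fract_nonneg (c u)
    have := Int.fract_lt_one (c u)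
    rw [← Int.self_sub_floor] at *
    dsimp only
    rw [abs_le]
    split_ifs <;> push_cast <;> constructor <;> linarith

end Lattice

namespace EuclideanSpace

variable {ι : Type*} [Fintype ι]

lemma real_norm_eq_sqrt_sum_sq (x : EuclideanSpace ℝ ι) : ‖x‖ = √(∑ u, x u ^ 2) := by
  simp [EuclideanSpace.norm_eq, Real.norm_eq_abs, sq_abs]

lemma norm_le_norm_of_abs_le {x y : EuclideanSpace ℝ ι} (h : ∀ u, |x u| ≤ |y u|) :
    ‖x‖ ≤ ‖y‖ := by
  simp only [real_norm_eq_sqrt_sum_sq]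
  exact Real.sqrt_le_sqrt (sum_le_sum fun u _ => sq_le_sq.2 (h u))

lemma norm_le_sqrt_card_mul {x : EuclideanSpace ℝ ι} {c : ℝ} (hc : 0 ≤ c) (h : ∀ u, |x u| ≤ c) :
    ‖x‖ ≤ √(Fintype.card ι) * c := by
  calc ‖x‖ ≤ √(∑ _u : ι, c ^ 2) := by
        rw [real_norm_eq_sqrt_sum_sq]
        exact Real.sqrt_le_sqrt (sum_le_sum fun u _ => sq_le_sq.2 ((h u).trans (le_abs_self c)))
    _ = √(Fintype.card ι) * c := by simp [Real.sqrt_mul, Real.sqrt_sq hc]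

lemma mem_orthogonal_ones_iff {x : EuclideanSpace ℝ ι} :
    x ∈ (ℝ ∙ toLp 2 (1 : ι → ℝ))ᗮ ↔ ∑ u, x u = 0 := by
  simp [Submodule.mem_orthogonal_singleton_iff_inner_right, EuclideanSpace.inner_eq_star_dotProduct,
    dotProduct]

end EuclideanSpace

section Nets

open EuclideanSpace

variable {ι : Type*} [Fintype ι] {δ : ℝ}

lemma exists_isLatticePoint_norm_le_norm_sub_le (hδ : 0 < δ) (w : EuclideanSpace ℝ ι) :
    ∃ y : EuclideanSpace ℝ ι, IsLatticePoint δ y.ofLp ∧ ‖y‖ ≤ ‖w‖ ∧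
      ‖y - w‖ ≤ √(Fintype.card ι) * δ := by
  choose k hk hk' using fun u => exists_int_abs_mul_le_abs_sub_le hδ (w u)
  exact ⟨toLp 2 fun u => k u * δ, fun u => ⟨k u, rfl⟩, norm_le_norm_of_abs_le hk,
    norm_le_sqrt_card_mul hδ.le hk'⟩

lemma exists_isLatticePoint_sum_eq_zero_norm_sub_le (hδ : 0 < δ) {z : EuclideanSpace ℝ ι}
    (hz : ∑ u, z u = 0) :
    ∃ x : EuclideanSpace ℝ ι, IsLatticePoint δ x.ofLp ∧ ∑ u, x u = 0 ∧
      ‖x - z‖ ≤ √(Fintype.card ι) * δ := by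
  obtain ⟨k, hk, hk'⟩ :=
    exists_int_sum_eq_zero_abs_sub_le_one (fun u => z u / δ) (by rw [← sum_div, hz, zero_div])
  refine ⟨toLp 2 fun u => k u * δ, fun u => ⟨k u, rfl⟩, ?_,
    norm_le_sqrt_card_mul hδ.le fun u => ?_⟩
  · simp [← sum_mul, ← Int.cast_sum, hk]
  · have hku : (k u : ℝ) * δ - z u = ((k u : ℝ) - z u / δ) * δ := by field_simp
    simpa [hku, abs_mul, abs_of_pos hδ] using mul_le_mul_of_nonneg_right (hk' u) hδ.le

lemma exists_isLatticePoint_mem_orthogonal_ones_norm_le_one {ε : ℝ} (hδ : 0 < δ)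
    (hεδ : √(Fintype.card ι) * δ = ε) (hε1 : ε ≤ 1) {z : EuclideanSpace ℝ ι}
    (hz : z ∈ (ℝ ∙ toLp 2 (1 : ι → ℝ))ᗮ) (hz1 : ‖z‖ = 1) :
    ∃ x ∈ (ℝ ∙ toLp 2 (1 : ι → ℝ))ᗮ, IsLatticePoint δ x.ofLp ∧ ‖x‖ ≤ 1 ∧ ‖x - z‖ ≤ 2 * ε := by
  have hε : 0 ≤ ε := hεδ ▸ by positivity
  have hz' : (1 - ε) • z ∈ (ℝ ∙ toLp 2 (1 : ι → ℝ))ᗮ := Submodule.smul_mem _ _ hz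
  obtain ⟨x, hx, hx0, hxz⟩ :=
    exists_isLatticePoint_sum_eq_zero_norm_sub_le hδ (mem_orthogonal_ones_iff.1 hz')
  rw [hεδ] at hxz
  have hz'1 : ‖(1 - ε) • z‖ = 1 - ε := by
    rw [norm_smul, hz1, mul_one, Real.norm_of_nonneg (by linarith)]
  have hz'z : ‖(1 - ε) • z - z‖ = ε := by
    rw [show (1 - ε) • z - z = (-ε) • z by module, norm_smul, hz1, mul_one, norm_neg,
      Real.norm_of_nonneg hε]
  refine ⟨x, mem_orthogonal_ones_iff.2 hx0, hx, ?_, ?_⟩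
  · linarith [norm_le_insert' x ((1 - ε) • z)]
  · linarith [norm_sub_le_norm_sub_add_norm_sub x ((1 - ε) • z) z]

end Nets

theorem ContinuousLinearMap.opNorm_le_of_abs_inner_le_on_nets {E F : Type*}
    [NormedAddCommGroup E] [NormedSpace ℝ E] [NormedAddCommGroup F] [InnerProductSpace ℝ F]
    (A : E →L[ℝ] F) {X : Set E} {Y : Set F} {ε α : ℝ} (hε : 0 ≤ ε) (hε3 : 3 * ε < 1)
    (hα : 0 ≤ α) (hX : ∀ z, ‖z‖ = 1 → ∃ x ∈ X, ‖x - z‖ ≤ 2 * ε)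
    (hY : ∀ w, ‖w‖ = 1 → ∃ y ∈ Y, ‖y‖ ≤ 1 ∧ ‖y - w‖ ≤ ε)
    (hXY : ∀ x ∈ X, ∀ y ∈ Y, |⟪y, A x⟫| ≤ α) :
    ‖A‖ ≤ (1 - 3 * ε)⁻¹ * α := by
  have key : ∀ z, ‖z‖ = 1 → (1 - ε) * ‖A z‖ ≤ α + 2 * ε * ‖A‖ := by
    intro z hz
    rcases eq_or_ne (A z) 0 with hAz | hAz
    · rw [hAz, norm_zero, mul_zero]; positivity
    obtain ⟨x, hxX, hxz⟩ := hX z hz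
    set w := (‖A z‖⁻¹ : ℝ) • A z
    obtain ⟨y, hyY, hy1, hyw⟩ := hY w (norm_smul_inv_norm hAz)
    have hw : ⟪w, A z⟫ = ‖A z‖ := by
      rw [real_inner_smul_left, real_inner_self_eq_norm_sq]
      field_simp
    have hyw_inner : |⟪y - w, A z⟫| ≤ ε * ‖A z‖ :=
      (abs_real_inner_le_norm _ _).trans (by gcongr)
    have hxz_inner : |⟪y, A (x - z)⟫| ≤ ‖A‖ * (2 * ε) :=
      calc |⟪y, A (x - z)⟫| ≤ ‖y‖ * ‖A (x - z)‖ := abs_real_inner_le_norm _ _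
        _ ≤ 1 * (‖A‖ * ‖x - z‖) := by gcongr; exact le_opNorm A _
        _ ≤ ‖A‖ * (2 * ε) := by rw [one_mul]; gcongr
    have hsplit : ⟪y, A x⟫ = ⟪w, A z⟫ + ⟪y - w, A z⟫ + ⟪y, A (x - z)⟫ := by
      simp only [map_sub, inner_sub_left, inner_sub_right]; ring
    have hα' := (abs_le.1 (hXY x hxX y hyY)).2
    linarith [(abs_le.1 hyw_inner).1, (abs_le.1 hxz_inner).1]
  have h1ε : 0 < 1 - ε := by linarith
  have hA : ‖A‖ ≤ (α + 2 * ε * ‖A‖) / (1 - ε) :=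
    opNorm_le_of_unit_norm (by positivity) fun z hz => by
      rw [le_div_iff₀ h1ε]; linarith [key z hz]
  rw [le_div_iff₀ h1ε] at hA
  rw [inv_mul_eq_div, le_div_iff₀ (by linarith)]
  linarith

theorem stmt4_general (m : ℕ) (M : Matrix (Fin m) (Fin m) ℝ)
    (ε α : ℝ) (hε : 0 < ε) (hε3 : ε < 1 / 3)
    (h : ∀ x y : Fin m → ℝ,
      (∀ u, ∃ k : ℤ, x u = k * (ε / Real.sqrt m)) →
      Real.sqrt (∑ u, (x u) ^ 2) ≤ 1 → (∑ u, x u) = 0 →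
      (∀ u, ∃ k : ℤ, y u = k * (ε / Real.sqrt m)) →
      Real.sqrt (∑ u, (y u) ^ 2) ≤ 1 →
      |∑ u, y u * M.mulVec x u| ≤ α) :
    ∀ z : Fin m → ℝ, Real.sqrt (∑ u, (z u) ^ 2) = 1 → (∑ u, z u) = 0 →
      Real.sqrt (∑ u, (M.mulVec z u) ^ 2) ≤ (1 - 3 * ε)⁻¹ * α := by
  intro z hz1 hz0
  have hsqrt_m : 0 < √(m : ℝ) := Real.sqrt_pos.2 <| Nat.cast_pos.2 <|
    Nat.pos_of_ne_zero (by rintro rfl; simp at hz1)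
  have hεδ : √(Fintype.card (Fin m) : ℝ) * (ε / √m) = ε := by
    rw [Fintype.card_fin]; field_simp
  have hα : 0 ≤ α := by
    simpa using h 0 0 (fun _ => ⟨0, by simp⟩) (by simp) (by simp) (fun _ => ⟨0, by simp⟩) (by simp)
  set H := (ℝ ∙ toLp 2 (1 : Fin m → ℝ))ᗮ
  set A : H →L[ℝ] EuclideanSpace ℝ (Fin m) := (toEuclideanCLM (𝕜 := ℝ) M).comp H.subtypeL
  have hA : ‖A‖ ≤ (1 - 3 * ε)⁻¹ * α := by
    refine A.opNorm_le_of_abs_inner_le_on_nets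
      (X := {x | IsLatticePoint (ε / √m) (x : EuclideanSpace ℝ (Fin m)).ofLp ∧ ‖x‖ ≤ 1})
      (Y := {y | IsLatticePoint (ε / √m) y.ofLp ∧ ‖y‖ ≤ 1}) hε.le (by linarith) hα
      (fun z hz => ?_) (fun w hw => ?_) (fun x hx y hy => ?_)
    · obtain ⟨x, hxH, hx, hx1, hxz⟩ := exists_isLatticePoint_mem_orthogonal_ones_norm_le_one
        (by positivity) hεδ (by linarith) z.2 hz
      exact ⟨⟨x, hxH⟩, ⟨hx, hx1⟩, hxz⟩
    · obtain ⟨y, hy, hyw, hyw'⟩ :=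
        exists_isLatticePoint_norm_le_norm_sub_le (δ := ε / √m) (by positivity) w
      exact ⟨y, ⟨hy, hyw.trans hw.le⟩, hyw.trans hw.le, hεδ ▸ hyw'⟩
    · rw [ContinuousLinearMap.comp_apply, Matrix.inner_toEuclideanCLM]
      exact h _ _ hx.1 (by simpa [EuclideanSpace.real_norm_eq_sqrt_sum_sq] using hx.2)
        (EuclideanSpace.mem_orthogonal_ones_iff.1 x.2) hy.1
        (by simpa [EuclideanSpace.real_norm_eq_sqrt_sum_sq] using hy.2)
  have hzH : toLp 2 z ∈ H := EuclideanSpace.mem_orthogonal_ones_iff.2 hz0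
  calc √(∑ u, (M *ᵥ z) u ^ 2) = ‖A ⟨toLp 2 z, hzH⟩‖ := by
        simp [A, EuclideanSpace.real_norm_eq_sqrt_sum_sq]
    _ ≤ ‖A‖ * ‖toLp 2 z‖ := A.le_opNorm _
    _ ≤ (1 - 3 * ε)⁻¹ * α := by
        rwa [EuclideanSpace.real_norm_eq_sqrt_sum_sq, hz1, mul_one]

/-- Discretization via an ε-net: if `|yᵀMx| ≤ α` on the lattice nets `T`, `T'`,
then `‖Mz‖ ≤ (1 - 3ε)⁻¹ α` for all unit `z ⟂ 1`. -/
theorem stmt4 (m : ℕ) (M : Matrix (Fin m) (Fin m) ℝ) (hM : ∀ i j, 0 ≤ M i j)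
    (ε α : ℝ) (hε : 0 < ε) (hε3 : ε < 1 / 3)
    (h : ∀ x y : Fin m → ℝ,
      (∀ u, ∃ k : ℤ, x u = k * (ε / Real.sqrt m)) →
      Real.sqrt (∑ u, (x u) ^ 2) ≤ 1 → (∑ u, x u) = 0 →
      (∀ u, ∃ k : ℤ, y u = k * (ε / Real.sqrt m)) →
      Real.sqrt (∑ u, (y u) ^ 2) ≤ 1 →
      |∑ u, y u * M.mulVec x u| ≤ α) :
    ∀ z : Fin m → ℝ, Real.sqrt (∑ u, (z u) ^ 2) = 1 → (∑ u, z u) = 0 →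
      Real.sqrt (∑ u, (M.mulVec z u) ^ 2) ≤ (1 - 3 * ε)⁻¹ * α :=
  stmt4_general m M ε α hε hε3 h
end

section
/- Let M be a random m×m 0/1 matrix where each column independently contains exactly t ones in uniformly random positions (t ≤ √m, so in particular t ≤ m/2). Then for any set A of rows, set B of columns, and any set J ⊆ A×B of possible incidences, the probability that the set of incidences between A and B equals exactly J is at most (2t/m)^{|J|}. -/
open Finset

/-!
Columns are independent, so the probability factorises over columns. In column `j` the event
forces the `k_j` rows `{i | (i, j) ∈ J}` to lie in the random `t`-set, which happens for at
most `C(m, t - k_j)` of the `C(m, t)` choices; and `C(m, t - k) ≤ C(m, t) (2t/m)^k` when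
`2t ≤ m`, since each step `C(m, s) ≤ (2t/m) C(m, s + 1)` for `s < t` only uses `m ≤ 2(m - s)`.
Multiplying over columns gives `(2t/m)^{∑ k_j} = (2t/m)^{|J|}`.
-/

namespace Nat

theorem choose_mul_le_two_mul_choose_succ {m t s : ℕ} (hm : 2 * t ≤ m) (hs : s < t) :
    m.choose s * m ≤ 2 * t * m.choose (s + 1) :=
  calc m.choose s * m ≤ m.choose s * (2 * (m - s)) := Nat.mul_le_mul_left _ (by omega)
    _ = 2 * (m.choose s * (m - s)) := by ring
    _ = 2 * (m.choose (s + 1) * (s + 1)) := by rw [choose_succ_right_eq]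
    _ ≤ 2 * t * m.choose (s + 1) := by
        rw [mul_assoc, mul_comm (m.choose _)]
        exact Nat.mul_le_mul_left _ (Nat.mul_le_mul_right _ hs)

theorem choose_sub_mul_pow_le {m t k : ℕ} (hm : 2 * t ≤ m) (hk : k ≤ t) :
    m.choose (t - k) * m ^ k ≤ m.choose t * (2 * t) ^ k := by
  induction k with
  | zero => simp
  | succ k ih =>
    have hstep := choose_mul_le_two_mul_choose_succ hm (show t - (k + 1) < t by omega)
    rw [show t - (k + 1) + 1 = t - k by omega] at hstep
    calc m.choose (t - (k + 1)) * m ^ (k + 1) = m.choose (t - (k + 1)) * m * m ^ k := by ring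
      _ ≤ 2 * t * (m.choose (t - k) * m ^ k) := by
          rw [← mul_assoc]; exact Nat.mul_le_mul_right _ hstep
      _ ≤ 2 * t * (m.choose t * (2 * t) ^ k) := Nat.mul_le_mul_left _ (ih (by omega))
      _ = m.choose t * (2 * t) ^ (k + 1) := by ring

theorem choose_sub_le_choose_mul_pow {m t k : ℕ} (hm : 2 * t ≤ m) (hk : k ≤ t) :
    (m.choose (t - k) : ℝ) ≤ m.choose t * (2 * t / m) ^ k := by
  rcases Nat.eq_zero_or_pos m with rfl | hm0
  · obtain rfl : k = 0 := by omega
    simp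
  rw [div_pow, mul_div_assoc', le_div_iff₀ (by positivity)]
  exact_mod_cast choose_sub_mul_pow_le hm hk

end Nat

section Supersets

variable {α : Type*} [Fintype α] [DecidableEq α]

theorem card_supersets_le_choose (t : ℕ) (D : Finset α) :
    Nat.card {s : {s : Finset α // s.card = t} // D ⊆ s.1}
      ≤ (Fintype.card α).choose (t - #D) := by
  let f : {s : {s : Finset α // s.card = t} // D ⊆ s.1} → {s : Finset α // s.card = t - #D} :=
    fun s => ⟨s.1.1 \ D, by rw [card_sdiff_of_subset s.2, s.1.2]⟩
  have hf : Function.Injective f := fun s₁ s₂ h => by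
    have h' : s₁.1.1 \ D = s₂.1.1 \ D := congrArg Subtype.val h
    apply Subtype.ext; apply Subtype.ext
    rw [← sdiff_union_of_subset s₁.2, ← sdiff_union_of_subset s₂.2, h']
  simpa [Nat.card_eq_fintype_card, Fintype.card_finset_len] using
    Nat.card_le_card_of_injective f hf

theorem card_supersets_le_choose_mul_pow {t : ℕ} (ht : 2 * t ≤ Fintype.card α)
    (D : Finset α) :
    (Nat.card {s : {s : Finset α // s.card = t} // D ⊆ s.1} : ℝ)
      ≤ (Fintype.card α).choose t * (2 * t / Fintype.card α) ^ #D := by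
  by_cases hD : #D ≤ t
  · exact (Nat.cast_le.mpr (card_supersets_le_choose t D)).trans
      (Nat.choose_sub_le_choose_mul_pow ht hD)
  · have : IsEmpty {s : {s : Finset α // s.card = t} // D ⊆ s.1} :=
      ⟨fun s => hD (s.1.2 ▸ card_le_card s.2)⟩
    rw [Nat.card_of_isEmpty, Nat.cast_zero]
    positivity

end Supersets

section Incidences

variable {α ι : Type*} [Fintype α] [DecidableEq α] [Fintype ι] [DecidableEq ι]

theorem sum_card_column_eq_card (J : Finset (α × ι)) : ∑ j, #{i | (i, j) ∈ J} = #J := by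
  simp only [card_eq_sum_ones, sum_filter]
  rw [← Fintype.sum_prod_type_right (f := fun p => if p ∈ J then 1 else 0), ← sum_filter,
    filter_univ_mem]

theorem card_incidences_eq_le_prod {t : ℕ} {A : Finset α} {B : Finset ι}
    {J : Finset (α × ι)} (hJ : J ⊆ A ×ˢ B) :
    Nat.card {ω : ι → {s : Finset α // s.card = t} //
        ∀ p ∈ A ×ˢ B, (p ∈ J ↔ p.1 ∈ (ω p.2).1)}
      ≤ ∏ j, Nat.card
          {s : {s : Finset α // s.card = t} // ({i | (i, j) ∈ J} : Finset α) ⊆ s.1} := by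
  rw [← Nat.card_pi]
  refine Nat.card_le_card_of_injective
    (fun ω j => ⟨ω.1 j, fun i hi => by
      have hij : (i, j) ∈ J := (mem_filter.mp hi).2
      exact (ω.2 (i, j) (hJ hij)).mp hij⟩)
    fun ω₁ ω₂ h => Subtype.ext (funext fun j => congrArg Subtype.val (congrFun h j))

theorem card_incidences_eq_div_le {t : ℕ} (ht : 2 * t ≤ Fintype.card α) {A : Finset α}
    {B : Finset ι} {J : Finset (α × ι)} (hJ : J ⊆ A ×ˢ B) :
    (Nat.card {ω : ι → {s : Finset α // s.card = t} //
        ∀ p ∈ A ×ˢ B, (p ∈ J ↔ p.1 ∈ (ω p.2).1)} : ℝ)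
      / (Nat.card (ι → {s : Finset α // s.card = t}) : ℝ)
      ≤ (2 * (t : ℝ) / Fintype.card α) ^ #J := by
  set N := (Fintype.card α).choose t
  have hN : 0 < N := Nat.choose_pos (by omega)
  have htotal : Nat.card (ι → {s : Finset α // s.card = t}) = N ^ Fintype.card ι := by
    rw [Nat.card_fun, Nat.card_eq_fintype_card, Fintype.card_finset_len, Nat.card_eq_fintype_card]
  have hcolumn (j : ι) := card_supersets_le_choose_mul_pow ht {i | (i, j) ∈ J}
  rw [htotal, div_le_iff₀ (by positivity)]
  calc _ ≤ ∏ j : ι, (Nat.card {s : {s : Finset α // s.card = t} //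
          ({i | (i, j) ∈ J} : Finset α) ⊆ s.1} : ℝ) := by
        exact_mod_cast card_incidences_eq_le_prod hJ
    _ ≤ ∏ j : ι, (N * (2 * t / Fintype.card α : ℝ) ^ #{i | (i, j) ∈ J}) :=
        prod_le_prod (fun _ _ => by positivity) fun j _ => hcolumn j
    _ = (2 * t / Fintype.card α : ℝ) ^ #J * ((N ^ Fintype.card ι : ℕ) : ℝ) := by
        rw [prod_mul_distrib, prod_const, prod_pow_eq_pow_sum, sum_card_column_eq_card,
          card_univ]
        push_cast; ring

end Incidences

theorem stmt8_general (m t : ℕ) (htm : 2 * t ^ 2 ≤ m)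
    (A B : Finset (Fin m)) (J : Finset (Fin m × Fin m)) (hJ : J ⊆ A ×ˢ B) :
    (Nat.card {ω : Fin m → {s : Finset (Fin m) // s.card = t} //
        ∀ p ∈ A ×ˢ B, (p ∈ J ↔ p.1 ∈ (ω p.2).1)} : ℝ)
      / (Nat.card (Fin m → {s : Finset (Fin m) // s.card = t}) : ℝ)
      ≤ (2 * (t : ℝ) / m) ^ J.card := by
  have h2t : 2 * t ≤ Fintype.card (Fin m) := by
    rw [Fintype.card_fin]; linarith [Nat.le_self_pow two_ne_zero t]
  simpa using card_incidences_eq_div_le h2t hJ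

/-- In the random model where each column independently contains exactly `t` ones in
uniformly random positions, for sets `A` of rows and `B` of columns and any
`J ⊆ A × B`, the probability that the incidences between `A` and `B` are exactly `J`
is at most `(2t/m)^{|J|}`. -/
theorem stmt8 (m t : ℕ) (ht : 0 < t) (htm : 2 * t ^ 2 ≤ m)
    (A B : Finset (Fin m)) (J : Finset (Fin m × Fin m)) (hJ : J ⊆ A ×ˢ B) :
    (Nat.card {ω : Fin m → {s : Finset (Fin m) // s.card = t} //
        ∀ p ∈ A ×ˢ B, (p ∈ J ↔ p.1 ∈ (ω p.2).1)} : ℝ)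
      / (Nat.card (Fin m → {s : Finset (Fin m) // s.card = t}) : ℝ)
      ≤ (2 * (t : ℝ) / m) ^ J.card :=
  stmt8_general m t htm A B J hJ
end

section
/- Let X₀, X₁, …, X_n be a martingale with respect to Z₀, …, Z_n satisfying the C-bounded difference property |X_{i+1} − X_i| ≤ C, and with variance parameter σ² = Σ_{i=0}^{n−1} sup_{(Z₁,…,Zᵢ)} E[(X_{i+1} − Xᵢ)² | Z₁,…,Zᵢ]. Then for any λ > 0, P(|X_n − X₀| ≥ λ) ≤ 2·exp(−λ²/(2(σ² + Cλ/3))). -/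
/-!
For an increment `D` with `|D| ≤ C`, Bernstein's bound `exp y ≤ 1 + y + y² / (2 (1 - u / 3))`
for `|y| ≤ u < 3`, taken with `y = t D`, and `E[D | ℱᵢ] = 0` give
`E[exp (t D) | ℱᵢ] ≤ exp (t² vᵢ / (2 (1 - |t| C / 3)))`. Pulling out the `ℱᵢ`-measurable factor
`exp (t (Xᵢ - X₀))` and iterating bounds the moment generating function of `Xₙ - X₀` by
`exp (t² σ² / (2 (1 - |t| C / 3)))`, and Chernoff's bound at `±t` with `t = λ / (σ² + C λ / 3)`
controls both tails.
-/

open MeasureTheory Finset Real Nat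

theorem Real.exp_le_one_add_add_sq_div_of_abs_le {y u : ℝ} (hy : |y| ≤ u) (hu : u < 3) :
    exp y ≤ 1 + y + y ^ 2 / (2 * (1 - u / 3)) := by
  have hu0 : 0 ≤ u := (abs_nonneg y).trans hy
  have hexp : HasSum (fun n : ℕ => y ^ n / n !) (exp y) := by
    rw [Real.exp_eq_exp_ℝ]; exact NormedSpace.expSeries_div_hasSum_exp y
  have htail : HasSum (fun n : ℕ => y ^ (n + 2) / (n + 2)!) (exp y - (1 + y)) := by
    simpa [Finset.sum_range_succ] using (hasSum_nat_add_iff' 2).mpr hexp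
  have hgeom : HasSum (fun n : ℕ => y ^ 2 / 2 * (u / 3) ^ n) (y ^ 2 / 2 * (1 - u / 3)⁻¹) :=
    (hasSum_geometric_of_lt_one (by positivity) (by linarith)).mul_left _
  -- `2 * 3 ^ n ≤ (n + 2)!` makes the tail of the exponential series geometric with ratio `u / 3`
  have hterm (n : ℕ) : y ^ (n + 2) / (n + 2)! ≤ y ^ 2 / 2 * (u / 3) ^ n := by
    have hfac : (2 * 3 ^ n : ℝ) ≤ (n + 2)! := by
      exact_mod_cast (add_comm n 2 ▸ Nat.factorial_mul_pow_le_factorial : 2 ! * 3 ^ n ≤ (n + 2)!)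
    calc y ^ (n + 2) / (n + 2)! ≤ |y| ^ (n + 2) / (n + 2)! := by
          gcongr ?_ / _; exact (le_abs_self _).trans (abs_pow y _).le
      _ ≤ y ^ 2 * u ^ n / (2 * 3 ^ n) := by
          rw [pow_add, mul_comm, ← sq_abs y]
          gcongr
      _ = y ^ 2 / 2 * (u / 3) ^ n := by rw [div_pow]; ring
  calc exp y = 1 + y + (exp y - (1 + y)) := by ring
    _ ≤ 1 + y + y ^ 2 / 2 * (1 - u / 3)⁻¹ := by gcongr; exact hasSum_le hterm htail hgeom
    _ = 1 + y + y ^ 2 / (2 * (1 - u / 3)) := by rw [← div_div, ← div_eq_mul_inv]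

section Conditional

variable {Ω : Type*} {m m0 : MeasurableSpace Ω} {μ : Measure Ω}

theorem ae_norm_exp_mul_le {Y : Ω → ℝ} {B : ℝ} (hB : ∀ᵐ ω ∂μ, |Y ω| ≤ B) (t : ℝ) :
    ∀ᵐ ω ∂μ, ‖exp (t * Y ω)‖ ≤ exp (|t| * B) := by
  filter_upwards [hB] with ω hω
  rw [norm_of_nonneg (exp_pos _).le, exp_le_exp]
  calc t * Y ω ≤ |t| * |Y ω| := (le_abs_self _).trans (abs_mul _ _).le
    _ ≤ |t| * B := by gcongr

theorem integrable_exp_mul_of_ae_abs_le [IsFiniteMeasure μ] {Y : Ω → ℝ} {B : ℝ}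
    (hY : AEStronglyMeasurable Y μ) (hB : ∀ᵐ ω ∂μ, |Y ω| ≤ B) (t : ℝ) :
    Integrable (fun ω => exp (t * Y ω)) μ :=
  .of_bound (continuous_exp.comp_aestronglyMeasurable (hY.const_mul t)) _ (ae_norm_exp_mul_le hB t)

theorem nonneg_of_ae_condExp_sq_le [NeZero μ] {f : Ω → ℝ} {c : ℝ}
    (hc : ∀ᵐ ω ∂μ, μ[fun ω => f ω ^ 2 | m] ω ≤ c) : 0 ≤ c := by
  have hnonneg : 0 ≤ᵐ[μ] μ[fun ω => f ω ^ 2 | m] :=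
    condExp_nonneg (.of_forall fun ω => sq_nonneg (f ω))
  obtain ⟨ω, hω, hcω⟩ := (hnonneg.and hc).exists
  exact hω.trans hcω

theorem integral_mul_le_of_condExp_le [IsFiniteMeasure μ] (hm : m ≤ m0) {f g : Ω → ℝ} {B c : ℝ}
    (hf : StronglyMeasurable[m] f) (hf0 : 0 ≤ᵐ[μ] f) (hfB : ∀ᵐ ω ∂μ, ‖f ω‖ ≤ B)
    (hg : Integrable g μ) (hgc : μ[g | m] ≤ᵐ[μ] fun _ => c) :
    ∫ ω, f ω * g ω ∂μ ≤ c * ∫ ω, f ω ∂μ := by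
  have hf_int : Integrable f μ := .of_bound (hf.mono hm).aestronglyMeasurable B hfB
  calc ∫ ω, f ω * g ω ∂μ = ∫ ω, μ[f * g | m] ω ∂μ := (integral_condExp hm).symm
    _ = ∫ ω, f ω * μ[g | m] ω ∂μ :=
        integral_congr_ae (condExp_stronglyMeasurable_mul_of_bound hm hf hg B hfB)
    _ ≤ ∫ ω, f ω * c ∂μ := by
        refine integral_mono_ae (integrable_condExp.bdd_mul (hf.mono hm).aestronglyMeasurable hfB)
          (hf_int.mul_const c) ?_
        filter_upwards [hf0, hgc] with ω h0 hc
        exact mul_le_mul_of_nonneg_left hc h0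
    _ = c * ∫ ω, f ω ∂μ := by rw [integral_mul_const, mul_comm]

theorem condExp_exp_mul_le_of_abs_le [IsFiniteMeasure μ] (hm : m ≤ m0) {D : Ω → ℝ} {C v t : ℝ}
    (hD : AEStronglyMeasurable D μ) (hbdd : ∀ᵐ ω ∂μ, |D ω| ≤ C) (hmean : μ[D | m] =ᵐ[μ] 0)
    (hvar : ∀ᵐ ω ∂μ, μ[fun ω => D ω ^ 2 | m] ω ≤ v) (ht : |t| * C < 3) :
    μ[fun ω => exp (t * D ω) | m] ≤ᵐ[μ] fun _ => exp (t ^ 2 / (2 * (1 - |t| * C / 3)) * v) := by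
  set a := t ^ 2 / (2 * (1 - |t| * C / 3))
  have ha : 0 ≤ a := div_nonneg (sq_nonneg t) (by linarith)
  have hD_int : Integrable D μ := .of_bound hD C (by simpa only [Real.norm_eq_abs] using hbdd)
  have hD2_int : Integrable (fun ω => D ω ^ 2) μ := by
    refine .of_bound (hD.pow 2) (C ^ 2) ?_
    filter_upwards [hbdd] with ω h
    rw [norm_pow, Real.norm_eq_abs]
    exact pow_le_pow_left₀ (abs_nonneg _) h 2
  have hquad_int : Integrable (fun ω => 1 + t * D ω + a * D ω ^ 2) μ :=
    ((integrable_const 1).add (hD_int.const_mul t)).add (hD2_int.const_mul a)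
  have hquad : (fun ω => exp (t * D ω)) ≤ᵐ[μ] fun ω => 1 + t * D ω + a * D ω ^ 2 := by
    filter_upwards [hbdd] with ω h
    have hy : |t * D ω| ≤ |t| * C := by rw [abs_mul]; gcongr
    calc exp (t * D ω) ≤ 1 + t * D ω + (t * D ω) ^ 2 / (2 * (1 - |t| * C / 3)) :=
          exp_le_one_add_add_sq_div_of_abs_le hy ht
      _ = 1 + t * D ω + a * D ω ^ 2 := by ring
  have hcond_quad : μ[fun ω => 1 + t * D ω + a * D ω ^ 2 | m]
      =ᵐ[μ] fun ω => 1 + t * μ[D | m] ω + a * μ[fun ω => D ω ^ 2 | m] ω := by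
    have h_sum : μ[fun ω => 1 + t * D ω + a * D ω ^ 2 | m]
        =ᵐ[μ] μ[fun ω => 1 + t * D ω | m] + μ[fun ω => a * D ω ^ 2 | m] :=
      condExp_add ((integrable_const 1).add (hD_int.const_mul t)) (hD2_int.const_mul a) m
    have h_lin : μ[fun ω => 1 + t * D ω | m]
        =ᵐ[μ] μ[fun _ => (1 : ℝ) | m] + μ[fun ω => t * D ω | m] :=
      condExp_add (integrable_const 1) (hD_int.const_mul t) m
    have h_smul₁ : μ[fun ω => t * D ω | m] =ᵐ[μ] fun ω => t * μ[D | m] ω := condExp_smul t D m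
    have h_smul₂ : μ[fun ω => a * D ω ^ 2 | m] =ᵐ[μ] fun ω => a * μ[fun ω => D ω ^ 2 | m] ω :=
      condExp_smul a (fun ω => D ω ^ 2) m
    filter_upwards [h_sum, h_lin, h_smul₁, h_smul₂] with ω e_sum e_lin e₁ e₂
    rw [e_sum, Pi.add_apply, e_lin, Pi.add_apply, e₁, e₂, condExp_const hm]
  calc μ[fun ω => exp (t * D ω) | m]
      ≤ᵐ[μ] μ[fun ω => 1 + t * D ω + a * D ω ^ 2 | m] :=
        condExp_mono (integrable_exp_mul_of_ae_abs_le hD hbdd t) hquad_int hquad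
    _ =ᵐ[μ] fun ω => 1 + t * μ[D | m] ω + a * μ[fun ω => D ω ^ 2 | m] ω := hcond_quad
    _ ≤ᵐ[μ] fun _ => exp (a * v) := by
        filter_upwards [hmean, hvar] with ω h0 hv
        rw [h0, Pi.zero_apply, mul_zero, add_zero]
        calc 1 + a * μ[fun ω => D ω ^ 2 | m] ω ≤ a * v + 1 := by
              linarith [mul_le_mul_of_nonneg_left hv ha]
          _ ≤ exp (a * v) := add_one_le_exp _

end Conditional

/-- Bernstein's choice `t = λ / (σ² + C λ / 3)` degenerates to `t C = 3` when `σ² = 0`;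
there `t = 3 / (2 C)` attains the same exponent. -/
theorem exists_chernoff_exponent_eq {C lam σ2 : ℝ} (hC : 0 < C) (hlam : 0 < lam) (hσ : 0 ≤ σ2) :
    ∃ t, 0 ≤ t ∧ t * C < 3 ∧
      -(t * lam) + t ^ 2 / (2 * (1 - t * C / 3)) * σ2 = -lam ^ 2 / (2 * (σ2 + C * lam / 3)) := by
  rcases hσ.eq_or_lt with rfl | hσ
  · refine ⟨3 / (2 * C), by positivity, by field_simp; norm_num, ?_⟩
    field_simp
    ring
  · have hs : 0 < σ2 + C * lam / 3 := by positivity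
    refine ⟨lam / (σ2 + C * lam / 3), by positivity, ?_, ?_⟩
    · rw [div_mul_eq_mul_div, div_lt_iff₀ hs]
      linarith
    · have hden : 1 - lam / (σ2 + C * lam / 3) * C / 3 = σ2 / (σ2 + C * lam / 3) := by
        field_simp
        ring
      rw [hden]
      field_simp
      ring

section Martingale

open ProbabilityTheory

variable {Ω : Type*} {m0 : MeasurableSpace Ω} {μ : Measure Ω} {ℱ : Filtration ℕ m0}
  {X : ℕ → Ω → ℝ} {C : ℝ} {v : ℕ → ℝ}

theorem ae_abs_sub_le_of_abs_increment_le (hbdd : ∀ i, ∀ᵐ ω ∂μ, |X (i + 1) ω - X i ω| ≤ C)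
    (n : ℕ) : ∀ᵐ ω ∂μ, |X n ω - X 0 ω| ≤ n * C := by
  induction n with
  | zero => simp
  | succ k ih =>
    filter_upwards [hbdd k, ih] with ω h_step h_sum
    push_cast
    linarith [abs_sub_le (X (k + 1) ω) (X k ω) (X 0 ω)]

theorem MeasureTheory.Martingale.condExp_increment_ae_eq_zero (hX : Martingale X ℱ μ)
    (i : ℕ) : μ[fun ω => X (i + 1) ω - X i ω | ℱ i] =ᵐ[μ] 0 := by
  have h_sub : μ[fun ω => X (i + 1) ω - X i ω | ℱ i] =ᵐ[μ] μ[X (i + 1) | ℱ i] - μ[X i | ℱ i] :=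
    condExp_sub (hX.integrable (i + 1)) (hX.integrable i) (ℱ i)
  filter_upwards [h_sub, hX.condExp_ae_eq i.le_succ, hX.condExp_ae_eq le_rfl] with ω h h₁ h₀
  rw [h, Pi.sub_apply, h₁, h₀, sub_self, Pi.zero_apply]

theorem MeasureTheory.Martingale.integral_exp_mul_sub_le [IsProbabilityMeasure μ]
    (hX : Martingale X ℱ μ) (hbdd : ∀ i, ∀ᵐ ω ∂μ, |X (i + 1) ω - X i ω| ≤ C)
    (hv : ∀ i, ∀ᵐ ω ∂μ, μ[fun ω' => (X (i + 1) ω' - X i ω') ^ 2 | ℱ i] ω ≤ v i)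
    {t : ℝ} (ht : |t| * C < 3) (n : ℕ) :
    ∫ ω, exp (t * (X n ω - X 0 ω)) ∂μ
      ≤ exp (t ^ 2 / (2 * (1 - |t| * C / 3)) * ∑ i ∈ range n, v i) := by
  set a := t ^ 2 / (2 * (1 - |t| * C / 3))
  induction n with
  | zero => simp
  | succ k ih =>
    have h_adapted : StronglyMeasurable[ℱ k] fun ω => exp (t * (X k ω - X 0 ω)) :=
      continuous_exp.comp_stronglyMeasurable (((hX.stronglyAdapted k).sub
        ((hX.stronglyAdapted 0).mono (ℱ.mono k.zero_le))).const_mul t)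
    have h_incr : AEStronglyMeasurable (fun ω => X (k + 1) ω - X k ω) μ :=
      ((hX.integrable (k + 1)).sub (hX.integrable k)).aestronglyMeasurable
    calc ∫ ω, exp (t * (X (k + 1) ω - X 0 ω)) ∂μ
        = ∫ ω, exp (t * (X k ω - X 0 ω)) * exp (t * (X (k + 1) ω - X k ω)) ∂μ := by
          simp_rw [← exp_add, ← mul_add, sub_add_sub_cancel']
      _ ≤ exp (a * v k) * ∫ ω, exp (t * (X k ω - X 0 ω)) ∂μ :=
          integral_mul_le_of_condExp_le (ℱ.le k) h_adapted (.of_forall fun ω => (exp_pos _).le)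
            (ae_norm_exp_mul_le (ae_abs_sub_le_of_abs_increment_le hbdd k) t)
            (integrable_exp_mul_of_ae_abs_le h_incr (hbdd k) t)
            (condExp_exp_mul_le_of_abs_le (ℱ.le k) h_incr (hbdd k)
              (hX.condExp_increment_ae_eq_zero k) (hv k) ht)
      _ ≤ exp (a * v k) * exp (a * ∑ i ∈ range k, v i) := by gcongr
      _ = exp (a * ∑ i ∈ range (k + 1), v i) := by
          rw [← exp_add, sum_range_succ, mul_add, add_comm]

theorem MeasureTheory.Martingale.measureReal_le_abs_sub_le [IsProbabilityMeasure μ]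
    (hX : Martingale X ℱ μ) (hbdd : ∀ i, ∀ᵐ ω ∂μ, |X (i + 1) ω - X i ω| ≤ C)
    (hv : ∀ i, ∀ᵐ ω ∂μ, μ[fun ω' => (X (i + 1) ω' - X i ω') ^ 2 | ℱ i] ω ≤ v i)
    {t : ℝ} (ht0 : 0 ≤ t) (ht : t * C < 3) (n : ℕ) (lam : ℝ) :
    μ.real {ω | lam ≤ |X n ω - X 0 ω|}
      ≤ 2 * exp (-(t * lam) + t ^ 2 / (2 * (1 - t * C / 3)) * ∑ i ∈ range n, v i) := by
  set Y := fun ω => X n ω - X 0 ω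
  set a := t ^ 2 / (2 * (1 - t * C / 3))
  have h_int (s : ℝ) : Integrable (fun ω => exp (s * Y ω)) μ :=
    integrable_exp_mul_of_ae_abs_le ((hX.integrable n).sub (hX.integrable 0)).aestronglyMeasurable
      (ae_abs_sub_le_of_abs_increment_le hbdd n) s
  have h_mgf (s : ℝ) (hs : |s| = t) : mgf Y μ s ≤ exp (a * ∑ i ∈ range n, v i) := by
    have h := hX.integral_exp_mul_sub_le hbdd hv (hs ▸ ht) n
    rwa [← sq_abs s, hs] at h
  have h_upper : μ.real {ω | lam ≤ Y ω} ≤ exp (-(t * lam) + a * ∑ i ∈ range n, v i) := by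
    calc μ.real {ω | lam ≤ Y ω} ≤ exp (-t * lam) * mgf Y μ t :=
          measure_ge_le_exp_mul_mgf lam ht0 (h_int t)
      _ ≤ exp (-t * lam) * exp (a * ∑ i ∈ range n, v i) := by
          gcongr; exact h_mgf t (abs_of_nonneg ht0)
      _ = _ := by rw [← exp_add, neg_mul]
  have h_lower : μ.real {ω | Y ω ≤ -lam} ≤ exp (-(t * lam) + a * ∑ i ∈ range n, v i) := by
    calc μ.real {ω | Y ω ≤ -lam} ≤ exp (- -t * -lam) * mgf Y μ (-t) :=
          measure_le_le_exp_mul_mgf (-lam) (neg_nonpos.2 ht0) (h_int (-t))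
      _ ≤ exp (- -t * -lam) * exp (a * ∑ i ∈ range n, v i) := by
          gcongr; exact h_mgf (-t) (by rw [abs_neg, abs_of_nonneg ht0])
      _ = _ := by rw [← exp_add, neg_neg, mul_neg]
  calc μ.real {ω | lam ≤ |Y ω|} ≤ μ.real ({ω | lam ≤ Y ω} ∪ {ω | Y ω ≤ -lam}) :=
        measureReal_mono fun ω (hω : lam ≤ |Y ω|) => (le_abs'.1 hω).symm
    _ ≤ _ := (measureReal_union_le _ _).trans (add_le_add h_upper h_lower)
    _ = _ := (two_mul _).symm

end Martingale

/-- Freedman / Bernstein-type martingale inequality: for a martingale with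
`C`-bounded differences and variance parameter `σ²`,
`P(|Xₙ - X₀| ≥ λ) ≤ 2 exp(-λ²/(2(σ² + Cλ/3)))`. -/
theorem stmt10 {Ω : Type*} {m0 : MeasurableSpace Ω} (μ : Measure Ω)
    [IsProbabilityMeasure μ] (ℱ : Filtration ℕ m0) (X : ℕ → Ω → ℝ)
    (hX : Martingale X ℱ μ) (n : ℕ) (C : ℝ) (hC : 0 < C)
    (hbdd : ∀ i, ∀ᵐ ω ∂μ, |X (i + 1) ω - X i ω| ≤ C)
    (v : ℕ → ℝ)
    (hv : ∀ i, ∀ᵐ ω ∂μ, (μ[fun ω' => (X (i + 1) ω' - X i ω') ^ 2 | ℱ i]) ω ≤ v i)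
    (σ2 : ℝ) (hσ : σ2 = ∑ i ∈ Finset.range n, v i)
    (lam : ℝ) (hlam : 0 < lam) :
    (μ {ω | lam ≤ |X n ω - X 0 ω|}).toReal
      ≤ 2 * Real.exp (-lam ^ 2 / (2 * (σ2 + C * lam / 3))) := by
  have hσ_nonneg : 0 ≤ σ2 := hσ ▸ sum_nonneg fun i _ => nonneg_of_ae_condExp_sq_le (hv i)
  obtain ⟨t, ht0, htC, h_exponent⟩ := exists_chernoff_exponent_eq hC hlam hσ_nonneg
  have h_tail := hX.measureReal_le_abs_sub_le hbdd hv ht0 htC n lam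
  rwa [← hσ, h_exponent] at h_tail
end

section
/- Let H be a t-regular hypergraph on n vertices and m edges, and suppose every edge of H has size at most s. Then adding to each vertex's color an arbitrary reassignment via the Beck–Fiala argument shows disc(H) ≤ 2t − 1. Formally: for every t-regular hypergraph H (every vertex in exactly t edges), there exists χ : V → {−1, 1} with |Σ_{v∈e} χ(v)| ≤ 2t − 1 for every edge e. -/
/-!
Beck–Fiala: maintain a fractional colouring `x ∈ [-1, 1]^V`, starting from `0`. Call a vertex
floating while `|x v| < 1`, and an edge active while it has more than `t` floating vertices. As
every vertex lies in at most `t` edges, double counting gives fewer active edges than floating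
vertices, so some nonzero direction supported on the floating vertices keeps the sum over every
active edge fixed. Moving along it until a new vertex reaches `±1` strictly shrinks the floating
set. When all vertices are fixed, an edge has changed its sum only after it stopped being active,
i.e. through at most `t` floating vertices, each moving by less than `2`.
-/

open Finset

namespace BeckFiala

theorem exists_pos_abs_add_mul_eq_one {a b : ℝ} (ha : |a| < 1) (hb : b ≠ 0) :
    ∃ τ > 0, |a + τ * b| = 1 ∧ ∀ c, 0 ≤ c → c ≤ τ → |a + c * b| ≤ 1 := by
  wlog hb' : 0 < b generalizing a b
  · obtain ⟨τ, hτ, hhit, hsafe⟩ := this (a := -a) (b := -b) (by rwa [abs_neg])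
      (neg_ne_zero.mpr hb) (by linarith [lt_of_le_of_ne (not_lt.mp hb') hb])
    refine ⟨τ, hτ, ?_, fun c hc hcτ => ?_⟩
    · rw [← abs_neg]; convert hhit using 2; ring
    · rw [← abs_neg]; convert hsafe c hc hcτ using 2; ring
  obtain ⟨ha₁, ha₂⟩ := abs_lt.mp ha
  refine ⟨(1 - a) / b, div_pos (by linarith) hb', ?_, fun c hc hcτ => ?_⟩
  · rw [div_mul_cancel₀ _ hb]; norm_num
  · have : c * b ≤ 1 - a := (le_div_iff₀ hb').mp hcτ
    rw [abs_le]; constructor <;> nlinarith [mul_nonneg hc hb'.le]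

variable {V ι : Type*} [Fintype V]

noncomputable def floating (x : V → ℝ) : Finset V := {v | |x v| < 1}

lemma mem_floating {x : V → ℝ} {v : V} : v ∈ floating x ↔ |x v| < 1 := by
  simp [floating]

theorem exists_abs_add_mul_le_one_and_eq_one {x z : V → ℝ} (hx : ∀ v, |x v| ≤ 1) (hz : z ≠ 0)
    (hsupp : ∀ v, z v ≠ 0 → |x v| < 1) :
    ∃ c, (∀ v, |x v + c * z v| ≤ 1) ∧ ∃ v, z v ≠ 0 ∧ |x v + c * z v| = 1 := by
  choose τ hτpos hτhit hτsafe using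
    fun v : {v // z v ≠ 0} => exists_pos_abs_add_mul_eq_one (hsupp v v.2) v.2
  have : Nonempty {v // z v ≠ 0} := let ⟨v, hv⟩ := Function.ne_iff.mp hz; ⟨⟨v, hv⟩⟩
  obtain ⟨v₀, -, hmin⟩ := univ.exists_min_image τ univ_nonempty
  refine ⟨τ v₀, fun v => ?_, v₀, v₀.2, hτhit v₀⟩
  by_cases hv : z v = 0
  · simpa [hv] using hx v
  · exact hτsafe ⟨v, hv⟩ _ (hτpos v₀).le (hmin _ (mem_univ _))

variable [DecidableEq V] [Fintype ι]

noncomputable def activeEdges (E : ι → Finset V) (t : ℕ) (x : V → ℝ) : Finset ι :=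
  {e | t < #(E e ∩ floating x)}

theorem card_activeEdges_lt_card_floating {E : ι → Finset V} {t : ℕ}
    (hdeg : ∀ v, #{e | v ∈ E e} ≤ t) {x : V → ℝ} (hF : (floating x).Nonempty) :
    #(activeEdges E t x) < #(floating x) := by
  have hcount : #(activeEdges E t x) * (t + 1) ≤ #(floating x) * t :=
    card_mul_le_card_mul (fun e v => v ∈ E e)
      (fun e he => by
        simpa [activeEdges, bipartiteAbove, filter_mem_eq_inter, inter_comm] using he)
      (fun v _ => (card_le_card (filter_subset_filter _ (subset_univ _))).trans (hdeg v))
  have := hF.card_pos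
  nlinarith

theorem exists_ne_zero_eq_zero_of_notMem_sum_eq_zero (E : ι → Finset V) {A : Finset ι}
    {F : Finset V} (h : #A < #F) :
    ∃ z : V → ℝ, z ≠ 0 ∧ (∀ v ∉ F, z v = 0) ∧ ∀ e ∈ A, ∑ v ∈ E e, z v = 0 := by
  let L : (V → ℝ) →ₗ[ℝ] (A → ℝ) × ((Fᶜ : Finset V) → ℝ) :=
    (LinearMap.pi fun e : A => ∑ v ∈ E e, LinearMap.proj v).prod
      (LinearMap.pi fun v : (Fᶜ : Finset V) => LinearMap.proj (v : V))
  have hdim : Module.finrank ℝ ((A → ℝ) × ((Fᶜ : Finset V) → ℝ)) < Module.finrank ℝ (V → ℝ) := by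
    simp only [Module.finrank_prod, Module.finrank_fintype_fun_eq_card, Fintype.card_coe,
      card_compl]
    have := card_le_univ F
    omega
  obtain ⟨z, hzL, hz⟩ :=
    (Submodule.ne_bot_iff _).mp (LinearMap.ker_ne_bot_of_finrank_lt (f := L) hdim)
  have hzL : L z = 0 := hzL
  refine ⟨z, hz, fun v hv => ?_, fun e he => ?_⟩
  · simpa [L] using congr_fun (congr_arg Prod.snd hzL) ⟨v, by simpa using hv⟩
  · simpa [L] using congr_fun (congr_arg Prod.fst hzL) ⟨e, he⟩

theorem exists_shrink_floating {E : ι → Finset V} {t : ℕ} (hdeg : ∀ v, #{e | v ∈ E e} ≤ t)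
    {x : V → ℝ} (hx : ∀ v, |x v| ≤ 1) (hF : (floating x).Nonempty) :
    ∃ x' : V → ℝ, (∀ v, |x' v| ≤ 1) ∧ #(floating x') < #(floating x) ∧
      (∀ v, |x v| = 1 → x' v = x v) ∧
      ∀ e ∈ activeEdges E t x, ∑ v ∈ E e, x' v = ∑ v ∈ E e, x v := by
  obtain ⟨z, hz, hzF, hzA⟩ :=
    exists_ne_zero_eq_zero_of_notMem_sum_eq_zero E (card_activeEdges_lt_card_floating hdeg hF)
  have hsupp : ∀ v, z v ≠ 0 → |x v| < 1 := fun v hv =>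
    mem_floating.mp (not_not.mp fun h => hv (hzF v h))
  obtain ⟨c, hbound, v₀, hv₀, hhit⟩ := exists_abs_add_mul_le_one_and_eq_one hx hz hsupp
  have hfixed : ∀ v, |x v| = 1 → x v + c * z v = x v := fun v hv => by
    rw [hzF v (by simp [mem_floating, hv]), mul_zero, add_zero]
  refine ⟨fun v => x v + c * z v, hbound, card_lt_card ?_, hfixed, fun e he => ?_⟩
  · refine (ssubset_iff_of_subset fun v hv => ?_).mpr ⟨v₀, ?_, ?_⟩
    · rw [mem_floating] at hv ⊢
      by_contra h
      exact h (hfixed v (le_antisymm (hx v) (not_lt.mp h)) ▸ hv)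
    · exact mem_floating.mpr (hsupp v₀ hv₀)
    · simp [mem_floating, hhit]
  · rw [sum_add_distrib, ← mul_sum, hzA e he, mul_zero, add_zero]

theorem abs_sum_sub_lt_of_card_floating_le {t : ℕ} (ht : 0 < t) {χ : V → ℤ} {x : V → ℝ}
    (hχ : ∀ v, χ v = 1 ∨ χ v = -1) (hfix : ∀ v, |x v| = 1 → (χ v : ℝ) = x v)
    (hx : ∀ v, |x v| ≤ 1) {s : Finset V} (hs : #(s ∩ floating x) ≤ t) :
    |∑ v ∈ s, ((χ v : ℝ) - x v)| < 2 * t := by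
  have hsum : ∑ v ∈ s, ((χ v : ℝ) - x v) = ∑ v ∈ s ∩ floating x, ((χ v : ℝ) - x v) := by
    refine (sum_subset inter_subset_left fun v hvs hv => ?_).symm
    have : |x v| = 1 := le_antisymm (hx v) (not_lt.mp fun h => hv (mem_inter.mpr
      ⟨hvs, mem_floating.mpr h⟩))
    rw [hfix v this, sub_self]
  rw [hsum]
  rcases (s ∩ floating x).eq_empty_or_nonempty with hempty | hne
  · simp [hempty, ht]
  calc |∑ v ∈ s ∩ floating x, ((χ v : ℝ) - x v)|
      ≤ ∑ v ∈ s ∩ floating x, |(χ v : ℝ) - x v| := abs_sum_le_sum_abs _ _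
    _ < ∑ v ∈ s ∩ floating x, (2 : ℝ) := sum_lt_sum_of_nonempty hne fun v hv => by
        have := mem_floating.mp (mem_inter.mp hv).2
        exact (abs_sub _ _).trans_lt (by rcases hχ v with h | h <;> simp [h] <;> linarith)
    _ = 2 * #(s ∩ floating x) := by rw [sum_const, nsmul_eq_mul, mul_comm]
    _ ≤ 2 * t := by gcongr

theorem exists_sign_abs_sum_sub_lt {E : ι → Finset V} {t : ℕ} (ht : 0 < t)
    (hdeg : ∀ v, #{e | v ∈ E e} ≤ t) (x : V → ℝ) (hx : ∀ v, |x v| ≤ 1) :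
    ∃ χ : V → ℤ, (∀ v, χ v = 1 ∨ χ v = -1) ∧ (∀ v, |x v| = 1 → (χ v : ℝ) = x v) ∧
      ∀ e, |∑ v ∈ E e, ((χ v : ℝ) - x v)| < 2 * t := by
  induction hk : #(floating x) using Nat.strong_induction_on generalizing x with
  | _ k ih =>
  rcases (floating x).eq_empty_or_nonempty with hF | hF
  · have hfix : ∀ v, |x v| = 1 → ((if 0 < x v then 1 else -1 : ℤ) : ℝ) = x v := fun v hv => by
      rcases (abs_eq zero_le_one).mp hv with h | h <;> simp [h]
    exact ⟨fun v => if 0 < x v then 1 else -1, fun v => by dsimp only; split_ifs <;> simp, hfix,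
      fun e => abs_sum_sub_lt_of_card_floating_le ht (fun v => by split_ifs <;> simp) hfix hx
        (by simp [hF])⟩
  obtain ⟨x', hx', hlt, hfixed, hsum⟩ := exists_shrink_floating hdeg hx hF
  obtain ⟨χ, hχ, hχfix', hχsum⟩ := ih _ (hk ▸ hlt) x' hx' rfl
  have hχfix : ∀ v, |x v| = 1 → (χ v : ℝ) = x v := fun v hv => by
    rw [hχfix' v (by rwa [hfixed v hv]), hfixed v hv]
  refine ⟨χ, hχ, hχfix, fun e => ?_⟩
  by_cases he : e ∈ activeEdges E t x
  · simpa only [sum_sub_distrib, hsum e he] using hχsum e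
  · exact abs_sum_sub_lt_of_card_floating_le ht hχ hχfix hx (by simpa [activeEdges] using he)

end BeckFiala

/-- Beck–Fiala theorem: every `t`-regular hypergraph admits a `±1` coloring in
which every edge has discrepancy at most `2t - 1`. -/
theorem stmt18 (n m t : ℕ) (ht : 0 < t) (E : Fin m → Finset (Fin n))
    (hreg : ∀ v : Fin n, (Finset.univ.filter (fun e => v ∈ E e)).card = t) :
    ∃ χ : Fin n → ℤ, (∀ v, χ v = 1 ∨ χ v = -1) ∧
      ∀ e : Fin m, |∑ v ∈ E e, χ v| ≤ 2 * (t : ℤ) - 1 := by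
  obtain ⟨χ, hχ, -, hsum⟩ :=
    BeckFiala.exists_sign_abs_sum_sub_lt (E := E) ht (fun v => (hreg v).le) 0 (by simp)
  refine ⟨χ, hχ, fun e => ?_⟩
  have hreal : |((∑ v ∈ E e, χ v : ℤ) : ℝ)| < 2 * t := by simpa using hsum e
  have : |∑ v ∈ E e, χ v| < 2 * (t : ℤ) := by exact_mod_cast hreal
  omega
end
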